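/- Let C be an isodual binary linear code of length n, let σ ∈ S_n be such that C^⊥ = C^σ, let X = {1,…,n}, and let G = Aut(C). Suppose that the action of G on the set of t-element subsets of X has exactly two orbits, GT_1 and GT_2, and that (GT_1)^σ = GT_2. Then for every harmonic function f ∈ Harm_t^G (a degree-t harmonic function invariant under Aut(C)), the harmonic weight enumerators satisfy w_{C,f} + w_{C^⊥,f} = 0. -/

import Mathlib

/-!
Since `σ` carries the orbit `GT₁` onto `GT₂`, it also carries `GT₂` back into `GT₁`, and an
`Aut(C)`-invariant `f` is constant on each orbit; hence `f s + f (sσ) = f T₁ + f T₂` for every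
`t`-set `s`. A harmonic function of positive degree `t` sums to zero over all `t`-sets (sum `γ f`
over the `(t-1)`-sets), and so does `s ↦ f (sσ)`; summing therefore gives `f T₁ + f T₂ = 0`, i.e.
`f ∘ σ = -f`. Relabelling coordinates by `σ` turns `w_{C^σ,f}` into `w_{C,f∘σ⁻¹} = -w_{C,f}`.
-/

/-- Hamming weight of a binary vector. -/
def wt {n : ℕ} (c : Fin n → ZMod 2) : ℕ :=
  (Finset.univ.filter fun i => c i ≠ 0).card

/-- Support of a binary vector, as a finset of coordinates. -/
def suppF {n : ℕ} (c : Fin n → ZMod 2) : Finset (Fin n) :=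
  Finset.univ.filter fun i => c i ≠ 0

/-- Dual code w.r.t. the standard inner product on `F₂ⁿ`. -/
def dualCode {n : ℕ} (C : Set (Fin n → ZMod 2)) : Set (Fin n → ZMod 2) :=
  {y | ∀ x ∈ C, ∑ i, x i * y i = 0}

/-- The code `C^σ = {(c_{σ(1)},…,c_{σ(n)}) : c ∈ C}`. -/
def permCode {n : ℕ} (σ : Equiv.Perm (Fin n)) (C : Set (Fin n → ZMod 2)) :
    Set (Fin n → ZMod 2) :=
  (fun c => c ∘ σ) '' C

/-- Automorphism group (as a set of permutations) of a code: `Aut(C) = {σ : C^σ = C}`. -/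
def autCode {n : ℕ} (C : Set (Fin n → ZMod 2)) : Set (Equiv.Perm (Fin n)) :=
  {σ | permCode σ C = C}

/-- The orbit `GT = {T^σ : σ ∈ G}` of a finset `T` under a set `G` of permutations. -/
def orbitT {n : ℕ} (G : Set (Equiv.Perm (Fin n))) (T : Finset (Fin n)) :
    Set (Finset (Fin n)) :=
  {S | ∃ σ ∈ G, T.image σ = S}

/-- The differentiation `γ`: for `y` of cardinality `k - 1`,
`(γ f)(y) = ∑_{z ⊇ y, |z| = |y| + 1} f(z)`. -/
def gammaD {n : ℕ} (f : Finset (Fin n) → ℝ) (y : Finset (Fin n)) : ℝ :=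
  ∑ i ∈ yᶜ, f (insert i y)

/-- `f ∈ Harm_k`: a degree-`k` harmonic function, i.e. an element of `ℝX_k`
(a real-valued function supported on the `k`-element subsets) killed by `γ`. -/
def IsHarm {n : ℕ} (k : ℕ) (f : Finset (Fin n) → ℝ) : Prop :=
  (∀ s : Finset (Fin n), s.card ≠ k → f s = 0) ∧ ∀ y : Finset (Fin n), gammaD f y = 0

/-- `f̃(u) = ∑_{z ⊆ u} f(z)`. -/
def ftilde {n : ℕ} (f : Finset (Fin n) → ℝ) (u : Finset (Fin n)) : ℝ :=
  ∑ z ∈ u.powerset, f z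

/-- Harmonic weight enumerator `w_{C,f} = ∑_{c ∈ C} f̃(supp c) x^{n - wt c} y^{wt c}`,
in the variables `x = X 0`, `y = X 1`. -/
noncomputable def hwe {n : ℕ} (C : Set (Fin n → ZMod 2)) (f : Finset (Fin n) → ℝ) :
    MvPolynomial (Fin 2) ℝ :=
  ∑ c ∈ C.toFinite.toFinset,
    MvPolynomial.C (ftilde f (suppF c)) *
      MvPolynomial.X 0 ^ (n - wt c) * MvPolynomial.X 1 ^ (wt c)

open Finset

section Harmonic

variable {n : ℕ}

theorem sum_gammaD_powersetCard (f : Finset (Fin n) → ℝ) (m : ℕ) :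
    ∑ y ∈ powersetCard m univ, gammaD f y = (m + 1) * ∑ s ∈ powersetCard (m + 1) univ, f s := by
  have hcount : ∀ s ∈ powersetCard (m + 1) univ, (m + 1 : ℝ) * f s = ∑ _i ∈ s, f s := by
    intro s hs
    rw [sum_const, mem_powersetCard_univ.mp hs, nsmul_eq_mul, Nat.cast_succ]
  rw [mul_sum, sum_congr rfl hcount]
  simp only [gammaD]
  rw [sum_sigma', sum_sigma']
  -- `(y, i) ↦ (insert i y, i)` pairs `i ∉ y` with `i ∈ s`.
  refine sum_nbij' (fun p => ⟨insert p.2 p.1, p.2⟩) (fun q => ⟨q.1.erase q.2, q.2⟩)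
    ?_ ?_ ?_ ?_ (fun _ _ => rfl)
  · rintro ⟨y, i⟩ h
    simp_all [card_insert_of_notMem]
  · rintro ⟨s, i⟩ h
    simp_all [card_erase_of_mem]
  · rintro ⟨y, i⟩ h
    simp_all
  · rintro ⟨s, i⟩ h
    simp_all [insert_erase]

theorem sum_powersetCard_eq_zero_of_isHarm {k : ℕ} {f : Finset (Fin n) → ℝ} (hk : k ≠ 0)
    (hf : IsHarm k f) : ∑ s ∈ powersetCard k univ, f s = 0 := by
  obtain ⟨m, rfl⟩ := Nat.exists_eq_succ_of_ne_zero hk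
  have h := sum_gammaD_powersetCard f m
  simp only [hf.2, sum_const_zero] at h
  exact (mul_eq_zero.mp h.symm).resolve_left (by positivity)

theorem sum_powersetCard_apply_image_perm (f : Finset (Fin n) → ℝ) (σ : Equiv.Perm (Fin n))
    (k : ℕ) : ∑ s ∈ powersetCard k univ, f (s.image σ) = ∑ s ∈ powersetCard k univ, f s := by
  refine sum_nbij' (·.image σ) (·.image σ.symm) ?_ ?_ ?_ ?_ (fun _ _ => rfl)
  all_goals intro s hs; simp_all [card_image_of_injective _ (Equiv.injective _), image_image]

end Harmonic

section Code

variable {n : ℕ}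

theorem ftilde_image_perm (f : Finset (Fin n) → ℝ) (σ : Equiv.Perm (Fin n)) (u : Finset (Fin n)) :
    ftilde f (u.image σ) = ftilde (fun s => f (s.image σ)) u := by
  rw [ftilde, ftilde, powerset_image, sum_image]
  exact fun _ _ _ _ h => image_injective σ.injective h

theorem suppF_comp_perm (c : Fin n → ZMod 2) (σ : Equiv.Perm (Fin n)) :
    suppF (c ∘ σ) = (suppF c).image σ.symm := by
  ext i
  simp [suppF, Equiv.symm_apply_eq]

theorem wt_eq_card_suppF (c : Fin n → ZMod 2) : wt c = (suppF c).card := rfl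

theorem wt_comp_perm (c : Fin n → ZMod 2) (σ : Equiv.Perm (Fin n)) : wt (c ∘ σ) = wt c := by
  rw [wt_eq_card_suppF, wt_eq_card_suppF, suppF_comp_perm,
    card_image_of_injective _ σ.symm.injective]

theorem hwe_permCode (σ : Equiv.Perm (Fin n)) (C : Set (Fin n → ZMod 2)) (f : Finset (Fin n) → ℝ) :
    hwe (permCode σ C) f = hwe C (fun s => f (s.image σ.symm)) := by
  classical
  have hcodewords : (permCode σ C).toFinite.toFinset = C.toFinite.toFinset.image (· ∘ σ) := by
    ext c
    simp [permCode]
  rw [hwe, hwe, hcodewords, sum_image fun _ _ _ _ h => σ.surjective.injective_comp_right h]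
  refine sum_congr rfl fun c _ => ?_
  rw [wt_comp_perm, suppF_comp_perm, ftilde_image_perm]

theorem hwe_neg (C : Set (Fin n → ZMod 2)) (f : Finset (Fin n) → ℝ) :
    hwe C (-f) = -hwe C f := by
  simp only [hwe, ftilde, Pi.neg_apply, sum_neg_distrib, map_neg, neg_mul]

end Code

theorem one_mem_autCode {n : ℕ} (C : Set (Fin n → ZMod 2)) : 1 ∈ autCode C := by
  simp [autCode, permCode]

section Orbits

variable {n t : ℕ} {G : Set (Equiv.Perm (Fin n))} {σ : Equiv.Perm (Fin n)}
  {T T₁ T₂ s : Finset (Fin n)} {f : Finset (Fin n) → ℝ}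

theorem mem_orbitT_self (hG : 1 ∈ G) (T : Finset (Fin n)) : T ∈ orbitT G T :=
  ⟨1, hG, image_id⟩

theorem apply_eq_of_mem_orbitT (hinv : ∀ τ ∈ G, ∀ s, f (s.image τ) = f s)
    (h : s ∈ orbitT G T) : f s = f T := by
  obtain ⟨τ, hτ, rfl⟩ := h
  exact hinv τ hτ T

variable (hcover : ∀ T : Finset (Fin n), T.card = t → T ∈ orbitT G T₁ ∨ T ∈ orbitT G T₂)
  (hdisj : Disjoint (orbitT G T₁) (orbitT G T₂))
  (horb : (fun S : Finset (Fin n) => S.image σ) '' orbitT G T₁ = orbitT G T₂)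
include hcover hdisj horb

theorem image_mem_orbitT_of_mem_orbitT_right (hs : s.card = t) (h : s ∈ orbitT G T₂) :
    s.image σ ∈ orbitT G T₁ := by
  refine (hcover _ (by rwa [card_image_of_injective _ σ.injective])).resolve_right ?_
  rintro h'
  rw [← horb] at h'
  obtain ⟨u, hu, hus⟩ := h'
  rw [image_injective σ.injective hus] at hu
  exact Set.disjoint_left.mp hdisj hu h

theorem apply_add_apply_image_of_card_eq (hinv : ∀ τ ∈ G, ∀ s, f (s.image τ) = f s)
    (hs : s.card = t) : f s + f (s.image σ) = f T₁ + f T₂ := by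
  rcases hcover s hs with h | h
  · have hσs : s.image σ ∈ orbitT G T₂ := horb ▸ ⟨s, h, rfl⟩
    rw [apply_eq_of_mem_orbitT hinv h, apply_eq_of_mem_orbitT hinv hσs]
  · have hσs := image_mem_orbitT_of_mem_orbitT_right hcover hdisj horb hs h
    rw [apply_eq_of_mem_orbitT hinv h, apply_eq_of_mem_orbitT hinv hσs, add_comm]

theorem apply_add_apply_eq_zero_of_isHarm (hG : 1 ∈ G) (hT₁ : T₁.card = t) (hf : IsHarm t f)
    (hinv : ∀ τ ∈ G, ∀ s, f (s.image τ) = f s) : f T₁ + f T₂ = 0 := by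
  have ht : t ≠ 0 := by
    rintro rfl
    obtain rfl := card_eq_zero.mp hT₁
    have hσT₁ : (∅ : Finset (Fin n)).image σ ∈ orbitT G T₂ :=
      horb ▸ ⟨∅, mem_orbitT_self hG ∅, rfl⟩
    rw [image_empty] at hσT₁
    exact Set.disjoint_left.mp hdisj (mem_orbitT_self hG ∅) hσT₁
  have hsum : ∑ s ∈ powersetCard t univ, (f s + f (s.image σ)) = 0 := by
    rw [sum_add_distrib, sum_powersetCard_apply_image_perm,
      sum_powersetCard_eq_zero_of_isHarm ht hf, add_zero]
  rw [sum_congr rfl fun s hs => apply_add_apply_image_of_card_eq hcover hdisj horb hinv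
    (mem_powersetCard_univ.mp hs), sum_const, nsmul_eq_mul] at hsum
  have hT₁mem : T₁ ∈ powersetCard t univ := mem_powersetCard_univ.mpr hT₁
  exact (mul_eq_zero.mp hsum).resolve_left (by exact_mod_cast (card_pos.mpr ⟨T₁, hT₁mem⟩).ne')

theorem apply_image_eq_neg_of_isHarm (hG : 1 ∈ G) (hT₁ : T₁.card = t) (hf : IsHarm t f)
    (hinv : ∀ τ ∈ G, ∀ s, f (s.image τ) = f s) (s : Finset (Fin n)) :
    f (s.image σ) = -f s := by
  by_cases hs : s.card = t
  · linarith [apply_add_apply_image_of_card_eq hcover hdisj horb hinv hs,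
      apply_add_apply_eq_zero_of_isHarm hcover hdisj horb hG hT₁ hf hinv]
  · rw [hf.1 s hs, hf.1 _ (by rwa [card_image_of_injective _ σ.injective]), neg_zero]

end Orbits

theorem hwe_sum_zero_general {n t : ℕ} (C : Submodule (ZMod 2) (Fin n → ZMod 2))
    (σ : Equiv.Perm (Fin n)) (hσ : dualCode ↑C = permCode σ ↑C)
    (T₁ T₂ : Finset (Fin n)) (hT₁ : T₁.card = t)
    (hcover : ∀ T : Finset (Fin n), T.card = t →
      T ∈ orbitT (autCode ↑C) T₁ ∨ T ∈ orbitT (autCode ↑C) T₂)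
    (hdisj : Disjoint (orbitT (autCode ↑C) T₁) (orbitT (autCode ↑C) T₂))
    (horb : (fun S : Finset (Fin n) => S.image σ) '' orbitT (autCode ↑C) T₁
      = orbitT (autCode ↑C) T₂) :
    ∀ f : Finset (Fin n) → ℝ, IsHarm t f →
      (∀ τ ∈ autCode (↑C : Set (Fin n → ZMod 2)), ∀ s : Finset (Fin n), f (s.image τ) = f s) →
      hwe ↑C f + hwe (dualCode ↑C) f = 0 := by
  intro f hf hinv
  have hflip := apply_image_eq_neg_of_isHarm hcover hdisj horb (one_mem_autCode _) hT₁ hf hinv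
  have hflip_symm : (fun s => f (s.image σ.symm)) = -f := funext fun s => by
    rw [Pi.neg_apply, ← neg_eq_iff_eq_neg, ← hflip, image_image, σ.self_comp_symm, image_id]
  rw [hσ, hwe_permCode, hflip_symm, hwe_neg, add_neg_cancel]

/-- For an isodual binary linear code `C` with `C^⊥ = C^σ`, if `Aut(C)` has
exactly two orbits `GT₁ ⊔ GT₂` on `t`-element subsets and `(GT₁)^σ = GT₂`, then for every
degree-`t` harmonic function `f` invariant under `Aut(C)` we have `w_{C,f} + w_{C^⊥,f} = 0`. -/
theorem hwe_sum_zero {n t : ℕ} (C : Submodule (ZMod 2) (Fin n → ZMod 2))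
    (σ : Equiv.Perm (Fin n)) (hσ : dualCode ↑C = permCode σ ↑C)
    (T₁ T₂ : Finset (Fin n)) (hT₁ : T₁.card = t) (hT₂ : T₂.card = t)
    (hcover : ∀ T : Finset (Fin n), T.card = t →
      T ∈ orbitT (autCode ↑C) T₁ ∨ T ∈ orbitT (autCode ↑C) T₂)
    (hdisj : Disjoint (orbitT (autCode ↑C) T₁) (orbitT (autCode ↑C) T₂))
    (horb : (fun S : Finset (Fin n) => S.image σ) '' orbitT (autCode ↑C) T₁
      = orbitT (autCode ↑C) T₂) :
    ∀ f : Finset (Fin n) → ℝ, IsHarm t f →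
      (∀ τ ∈ autCode (↑C : Set (Fin n → ZMod 2)), ∀ s : Finset (Fin n), f (s.image τ) = f s) →
      hwe ↑C f + hwe (dualCode ↑C) f = 0 :=
  hwe_sum_zero_general C σ hσ T₁ T₂ hT₁ hcover hdisj horb
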